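/- Let F_{3,3} : ℝ^6 → ℝ^6 be given by F_{3,3}(x,y,u1,u2,u3,u4) = (x³+y³+u1·x+u2·y+u3·x²+u4·y², x·y, u1, u2, u3, u4). Then for every point q = (x,y,u1,u2,u3,u4) ∈ ℝ^6, the derivative of F_{3,3} at q applied to ξ_5(q) = (−(1/3)x³−(1/9)u3·x²+(−(2/9)u1+(2/27)u3²)x, (1/3)x²y+(1/9)u3·xy, −(4/3)u2·xy+(2/9)u1²−(2/27)u1·u3², −2x²y²−(2/9)u3·u4·xy, x³+y³+u1·x+u2·y+u3·x²+u4·y²+(5/9)u1·u3−(4/27)u3³, −(1/3)u3·xy) equals η_5(F_{3,3}(q)), where η_5(X,Y,U1,U2,U3,U4) = ((5/3)U4·Y²+(1/9)U2·U3·Y, (−(2/9)U1+(2/27)U3²)Y, −(4/3)U2·Y+(2/9)U1²−(2/27)U1·U3², −2Y²−(2/9)U3·U4·Y, X+(5/9)U1·U3−(4/27)U3³, −(1/3)U3·Y). In particular η_5 is liftable over F_{3,3}. -/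

import Mathlib

/-- The stable map `F₃₃` of discrete algebra type `B_{3,3}`. -/
noncomputable def F33 : ℝ × ℝ × ℝ × ℝ × ℝ × ℝ → ℝ × ℝ × ℝ × ℝ × ℝ × ℝ :=
  fun (x, y, u1, u2, u3, u4) =>
    (x^3 + y^3 + u1*x + u2*y + u3*x^2 + u4*y^2, x*y, u1, u2, u3, u4)

/-- The vector field `η₅` on the target of `F₃₃`. -/
noncomputable def eta5 : ℝ × ℝ × ℝ × ℝ × ℝ × ℝ → ℝ × ℝ × ℝ × ℝ × ℝ × ℝ :=
  fun (X, Y, U1, U2, U3, U4) =>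
    ((5/3)*U4*Y^2 + (1/9)*U2*U3*Y, (-(2/9)*U1 + (2/27)*U3^2)*Y,
     -(4/3)*U2*Y + (2/9)*U1^2 - (2/27)*U1*U3^2, -2*Y^2 - (2/9)*U3*U4*Y,
     X + (5/9)*U1*U3 - (4/27)*U3^3, -(1/3)*U3*Y)

/-- The lowerable vector field `ξ₅` on the source of `F₃₃`. -/
noncomputable def xi5 : ℝ × ℝ × ℝ × ℝ × ℝ × ℝ → ℝ × ℝ × ℝ × ℝ × ℝ × ℝ :=
  fun (x, y, u1, u2, u3, u4) =>
    (-(1/3)*x^3 - (1/9)*u3*x^2 + (-(2/9)*u1 + (2/27)*u3^2)*x,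
     (1/3)*x^2*y + (1/9)*u3*x*y,
     -(4/3)*u2*x*y + (2/9)*u1^2 - (2/27)*u1*u3^2,
     -2*x^2*y^2 - (2/9)*u3*u4*x*y,
     x^3 + y^3 + u1*x + u2*y + u3*x^2 + u4*y^2 + (5/9)*u1*u3 - (4/27)*u3^3,
     -(1/3)*u3*x*y)

-- The pattern-matching lambda of `F33` is opaque to the `fderiv` simp lemmas; projections are not.
theorem F33_eq_coords : F33 = fun p => (p.1 ^ 3 + p.2.1 ^ 3 + p.2.2.1 * p.1 + p.2.2.2.1 * p.2.1
    + p.2.2.2.2.1 * p.1 ^ 2 + p.2.2.2.2.2 * p.2.1 ^ 2, p.1 * p.2.1, p.2.2) :=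
  rfl

theorem fderiv_F33_apply (x y u1 u2 u3 u4 a b c1 c2 c3 c4 : ℝ) :
    fderiv ℝ F33 (x, y, u1, u2, u3, u4) (a, b, c1, c2, c3, c4) =
      ((3 * x ^ 2 + 2 * u3 * x + u1) * a + (3 * y ^ 2 + 2 * u4 * y + u2) * b
        + x * c1 + y * c2 + x ^ 2 * c3 + y ^ 2 * c4, y * a + x * b, c1, c2, c3, c4) := by
  rw [F33_eq_coords, DifferentiableAt.fderiv_prodMk (by fun_prop) (by fun_prop),
    DifferentiableAt.fderiv_prodMk (by fun_prop) (by fun_prop)]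
  simp (disch := fun_prop) only [fderiv_fun_add, fderiv_fun_mul, fderiv_fun_pow, fderiv.fst,
    fderiv.snd, fderiv_fun_id]
  simp only [ContinuousLinearMap.prod_apply, add_apply, smul_apply, ContinuousLinearMap.comp_apply,
    ContinuousLinearMap.coe_fst', ContinuousLinearMap.coe_snd', ContinuousLinearMap.coe_id', id,
    smul_eq_mul, nsmul_eq_mul]
  exact Prod.ext (by ring) (Prod.ext (by ring) rfl)

/-- `η₅` is liftable over `F₃₃` via `ξ₅`:
for every `q`, `d(F₃₃)_q (ξ₅ q) = η₅ (F₃₃ q)`. -/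
theorem eta5_liftable_over_F33 :
    ∀ q : ℝ × ℝ × ℝ × ℝ × ℝ × ℝ, fderiv ℝ F33 q (xi5 q) = eta5 (F33 q) := by
  rintro ⟨x, y, u1, u2, u3, u4⟩
  simp only [xi5, fderiv_F33_apply, F33, eta5]
  ext <;> ring
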